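/- For the planar reduced dual-futile-cycle system with F₁(x₁,x₂) = −k₂x₁/(K_{m1}/S_tot + K_{m1}(1−x₁−x₂)/K_{m2} + x₁) + h₄ c (K_{m3}(1−x₁−x₂)/K_{m4})/(K_{m3}/S_tot + K_{m3}(1−x₁−x₂)/K_{m4} + x₂), the partial derivative ∂F₁/∂x₂ is strictly negative on K₀ = {(x₁,x₂) : x₁ ≥ 0, x₂ ≥ 0, x₁+x₂ ≤ 1}, for all positive parameters k₂, h₄, c, S_tot, K_{m1}, K_{m2}, K_{m3}, K_{m4}. -/

import Mathlib

/-!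
For fixed `x₁` both summands of `F₁` are linear fractional in `x₂`, and
`(a + b t) / (c + d t)` has derivative `(b c - a d) / (c + d t) ^ 2`. For the first summand
`b c - a d` is `-k₂ x₁ Km1 / Km2 ≤ 0`, for the second it is
`-h₄ c (Km3 / Km4) (Km3 / S + 1 - x₁) < 0`; on `K₀` the denominators are positive.
-/

lemma hasDerivAt_div_affine (a b c d x : ℝ) (h : c + d * x ≠ 0) :
    HasDerivAt (fun t => (a + b * t) / (c + d * t)) ((b * c - a * d) / (c + d * x) ^ 2) x := by
  have hu : HasDerivAt (fun t => a + b * t) b x := by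
    simpa using ((hasDerivAt_id x).const_mul b).const_add a
  have hv : HasDerivAt (fun t => c + d * t) d x := by
    simpa using ((hasDerivAt_id x).const_mul d).const_add c
  exact (hu.div hv h).congr_deriv (by ring)

lemma exists_hasDerivAt_nonpos_neg_div_affine (r A K K' s e x : ℝ) (hr : 0 ≤ r) (hK : 0 < K)
    (hK' : 0 < K') (hD : A + K * (s - x) / K' + e ≠ 0) :
    ∃ f', HasDerivAt (fun t => -r / (A + K * (s - t) / K' + e)) f' x ∧ f' ≤ 0 := by
  have hf : (fun t => -r / (A + K * (s - t) / K' + e))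
      = fun t => (-r + 0 * t) / (A + K * s / K' + e + -(K / K') * t) := by
    funext t; congr 1 <;> ring
  refine ⟨_, hf ▸ hasDerivAt_div_affine _ _ _ _ x (ne_of_eq_of_ne (by ring) hD), ?_⟩
  apply div_nonpos_of_nonpos_of_nonneg _ (sq_nonneg _)
  have : 0 ≤ r * (K / K') := by positivity
  linarith

lemma exists_hasDerivAt_neg_mul_div_affine (m A K K' s x : ℝ) (hm : 0 < m) (hK : 0 < K)
    (hK' : 0 < K') (hAs : 0 < A + s) (hD : A + K * (s - x) / K' + x ≠ 0) :
    ∃ f', HasDerivAt (fun t => m * (K * (s - t) / K') / (A + K * (s - t) / K' + t)) f' x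
      ∧ f' < 0 := by
  have hf : (fun t => m * (K * (s - t) / K') / (A + K * (s - t) / K' + t))
      = fun t => (m * K * s / K' + -(m * K / K') * t) / (A + K * s / K' + (1 - K / K') * t) := by
    funext t; congr 1 <;> ring
  have hD' : A + K * s / K' + (1 - K / K') * x ≠ 0 := ne_of_eq_of_ne (by ring) hD
  refine ⟨_, hf ▸ hasDerivAt_div_affine _ _ _ _ x hD', ?_⟩
  apply div_neg_of_neg_of_pos _ (sq_pos_of_ne_zero hD')
  have key : -(m * K / K') * (A + K * s / K') - m * K * s / K' * (1 - K / K')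
      = -(m * (K / K') * (A + s)) := by ring
  rw [key, neg_neg_iff_pos]
  positivity

theorem stmt_11 (k₂ h₄ c S Km1 Km2 Km3 Km4 : ℝ)
    (hk₂ : 0 < k₂) (hh₄ : 0 < h₄) (hc : 0 < c) (hS : 0 < S)
    (h1 : 0 < Km1) (h2 : 0 < Km2) (h3 : 0 < Km3) (h4 : 0 < Km4)
    (x₁ x₂ : ℝ) (hx₁ : 0 ≤ x₁) (hx₂ : 0 ≤ x₂) (hsum : x₁ + x₂ ≤ 1) :
    deriv (fun t : ℝ =>
      -(k₂ * x₁) / (Km1 / S + Km1 * (1 - x₁ - t) / Km2 + x₁)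
      + h₄ * c * (Km3 * (1 - x₁ - t) / Km4)
          / (Km3 / S + Km3 * (1 - x₁ - t) / Km4 + t)) x₂ < 0 := by
  have hs : 0 ≤ 1 - x₁ - x₂ := by linarith
  obtain ⟨f₁', hf₁, hf₁'⟩ :=
    exists_hasDerivAt_nonpos_neg_div_affine (k₂ * x₁) (Km1 / S) Km1 Km2 (1 - x₁) x₁ x₂
      (by positivity) h1 h2 (by positivity)
  obtain ⟨f₂', hf₂, hf₂'⟩ :=
    exists_hasDerivAt_neg_mul_div_affine (h₄ * c) (Km3 / S) Km3 Km4 (1 - x₁) x₂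
      (by positivity) h3 h4 (by have := div_pos h3 hS; linarith) (by positivity)
  exact (hf₁.add hf₂).deriv.trans_lt (add_neg_of_nonpos_of_neg hf₁' hf₂')
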